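/- Kinematic similarity preserves Bohl exponents up to the transformation of initial conditions: if U(n) = F(n+1)⁻¹A(n)F(n) with F, F⁻¹ uniformly bounded, then for every ξ ≠ 0, β̄_U(F(0)⁻¹ξ) = β̄_A(ξ) and β̲_U(F(0)⁻¹ξ) = β̲_A(ξ). -/

import Mathlib

open Filter

attribute [local instance] Matrix.linftyOpNormedRing Matrix.linftyOpNormedAlgebra

/-- `Phi A n = X(n,0)`: forward/backward product of the coefficient matrices. -/
noncomputable def Phi {d : ℕ} (A : ℤ → Matrix (Fin d) (Fin d) ℝ) : ℤ → Matrix (Fin d) (Fin d) ℝ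
  | Int.ofNat n => ((List.range n).map (fun j => A ((n : ℤ) - 1 - j))).prod
  | Int.negSucc n => ((List.range (n + 1)).map (fun j => (A (Int.negSucc n + j))⁻¹)).prod

/-- The transition operator `X(m,n)` of the system `x_{k+1} = A(k) x_k`. -/
noncomputable def transOp {d : ℕ} (A : ℤ → Matrix (Fin d) (Fin d) ℝ) (m n : ℤ) :
    Matrix (Fin d) (Fin d) ℝ :=
  Phi A m * (Phi A n)⁻¹

/-- The filter describing `n - m → +∞` over pairs `(m, n)`. -/
noncomputable def bohlFilter : Filter (ℤ × ℤ) :=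
  Filter.comap (fun p : ℤ × ℤ => p.2 - p.1) Filter.atTop

/-- Upper Bohl exponent of the solution through `ξ`. -/
noncomputable def upperBohl {d : ℕ} (A : ℤ → Matrix (Fin d) (Fin d) ℝ) (ξ : Fin d → ℝ) : ℝ :=
  limsup (fun p : ℤ × ℤ =>
    (‖(transOp A p.2 0).mulVec ξ‖ / ‖(transOp A p.1 0).mulVec ξ‖) ^ (((p.2 - p.1 : ℤ) : ℝ)⁻¹))
    bohlFilter

/-- Lower Bohl exponent of the solution through `ξ`. -/
noncomputable def lowerBohl {d : ℕ} (A : ℤ → Matrix (Fin d) (Fin d) ℝ) (ξ : Fin d → ℝ) : ℝ :=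
  liminf (fun p : ℤ × ℤ =>
    (‖(transOp A p.2 0).mulVec ξ‖ / ‖(transOp A p.1 0).mulVec ξ‖) ^ (((p.2 - p.1 : ℤ) : ℝ)⁻¹))
    bohlFilter

/-- An invariant projector of the system `x_{k+1} = A(k) x_k`. -/
def IsInvProjector {d : ℕ} (A P : ℤ → Matrix (Fin d) (Fin d) ℝ) : Prop :=
  ∀ k : ℤ, P k * P k = P k ∧ P (k + 1) * A k = A k * P k

/-- Exponential dichotomy on `ℤ` with projector `P` and constants `K`, `ρ`. -/
def ExpDichotomy {d : ℕ} (A P : ℤ → Matrix (Fin d) (Fin d) ℝ) (K ρ : ℝ) : Prop :=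
  IsInvProjector A P ∧ 0 < K ∧ 0 < ρ ∧ ρ < 1 ∧
    (∀ k l : ℤ, l ≤ k → ‖transOp A k l * P l‖ ≤ K * ρ ^ (k - l)) ∧
    (∀ k l : ℤ, k ≤ l → ‖transOp A k l * (1 - P l)‖ ≤ K * ρ ^ (l - k))

/-- The exponential dichotomy spectrum of `x_{k+1} = A(k)x_k`. -/
def edSpectrum {d : ℕ} (A : ℤ → Matrix (Fin d) (Fin d) ℝ) : Set ℝ :=
  {γ : ℝ | 0 < γ ∧ ¬ ∃ (P : ℤ → Matrix (Fin d) (Fin d) ℝ) (K ρ : ℝ),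
    ExpDichotomy (fun n => γ⁻¹ • A n) P K ρ}



section Aux

lemma le_of_forall_one_add_mul {x a : ℝ} (ha : 0 ≤ a)
    (h : ∀ ε : ℝ, 0 < ε → x ≤ (1 + ε) * a) : x ≤ a := by
  by_contra hx
  push_neg at hx
  have hε : 0 < (x - a) / (2 * (a + 1)) := div_pos (by linarith) (by positivity)
  have hx2 := h _ hε
  have h1 : (x - a) / (2 * (a + 1)) * a ≤ (x - a) / 2 := by
    rw [div_mul_eq_mul_div, div_le_div_iff₀ (by positivity) (by norm_num)]
    nlinarith
  nlinarith

variable {α : Type*} {l : Filter α} [l.NeBot] {f g : α → ℝ}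

lemma limsup_le_of_ratio (hf : ∀ x, 0 ≤ f x) (hg : ∀ x, 0 ≤ g x)
    (hfg : ∀ ε : ℝ, 0 < ε → ∀ᶠ x in l, f x ≤ (1 + ε) * g x)
    (hgf : ∀ ε : ℝ, 0 < ε → ∀ᶠ x in l, g x ≤ (1 + ε) * f x) :
    limsup f l ≤ limsup g l := by
  rw [limsup_eq, limsup_eq]
  have hSf0 : ∀ a ∈ {a | ∀ᶠ x in l, f x ≤ a}, (0:ℝ) ≤ a := by
    intro a haS
    obtain ⟨x, hx⟩ := haS.exists
    exact (hf x).trans hx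
  have hSg0 : ∀ a ∈ {a | ∀ᶠ x in l, g x ≤ a}, (0:ℝ) ≤ a := by
    intro a haS
    obtain ⟨x, hx⟩ := haS.exists
    exact (hg x).trans hx
  rcases Set.eq_empty_or_nonempty {a | ∀ᶠ x in l, g x ≤ a} with hSg | hSg
  · have hSf : {a | ∀ᶠ x in l, f x ≤ a} = ∅ := by
      rw [Set.eq_empty_iff_forall_notMem]
      intro a haS
      have h2a : (2 * a) ∈ {a | ∀ᶠ x in l, g x ≤ a} := by
        filter_upwards [hgf 1 one_pos, haS] with x h1 h2x
        nlinarith [hf x]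
      rw [hSg] at h2a
      exact h2a
    rw [hSf, hSg]
  · refine le_csInf hSg (fun a haS => ?_)
    refine le_of_forall_one_add_mul (hSg0 a haS) (fun ε hε => ?_)
    have hmem : (1 + ε) * a ∈ {a | ∀ᶠ x in l, f x ≤ a} := by
      filter_upwards [hfg ε hε, haS] with x h1 h2
      calc f x ≤ (1 + ε) * g x := h1
        _ ≤ (1 + ε) * a := by nlinarith
    exact csInf_le ⟨0, hSf0⟩ hmem

lemma liminf_le_of_ratio (hf : ∀ x, 0 ≤ f x) (hg : ∀ x, 0 ≤ g x)
    (hfg : ∀ ε : ℝ, 0 < ε → ∀ᶠ x in l, f x ≤ (1 + ε) * g x)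
    (hgf : ∀ ε : ℝ, 0 < ε → ∀ᶠ x in l, g x ≤ (1 + ε) * f x) :
    liminf g l ≤ liminf f l := by
  rw [liminf_eq, liminf_eq]
  have hTf0 : (0:ℝ) ∈ {a | ∀ᶠ x in l, a ≤ f x} := Eventually.of_forall hf
  have hTg0 : (0:ℝ) ∈ {a | ∀ᶠ x in l, a ≤ g x} := Eventually.of_forall hg
  by_cases hbdd : BddAbove {a | ∀ᶠ x in l, a ≤ f x}
  · refine csSup_le ⟨0, hTg0⟩ (fun a haT => ?_)
    have hs0 : (0:ℝ) ≤ sSup {a | ∀ᶠ x in l, a ≤ f x} := le_csSup hbdd hTf0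
    rcases le_or_gt a 0 with ha | ha
    · exact ha.trans hs0
    · refine le_of_forall_one_add_mul hs0 (fun ε hε => ?_)
      have hmem : a / (1 + ε) ∈ {a | ∀ᶠ x in l, a ≤ f x} := by
        filter_upwards [hgf ε hε, haT] with x h1 h2
        rw [div_le_iff₀ (by positivity)]
        calc a ≤ g x := h2
          _ ≤ (1 + ε) * f x := h1
          _ = f x * (1 + ε) := mul_comm _ _
      have hle := le_csSup hbdd hmem
      rw [div_le_iff₀ (by positivity)] at hle
      linarith
  · have hbg : ¬ BddAbove {a | ∀ᶠ x in l, a ≤ g x} := by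
      rintro ⟨M, hM⟩
      apply hbdd
      refine ⟨max 0 (2 * M), fun a haT => ?_⟩
      rcases le_or_gt a 0 with ha | ha
      · exact ha.trans (le_max_left _ _)
      · have hmem : a / 2 ∈ {a | ∀ᶠ x in l, a ≤ g x} := by
          filter_upwards [hfg 1 one_pos, haT] with x h1 h2
          nlinarith [hg x]
        have := hM hmem
        refine le_trans ?_ (le_max_right _ _)
        linarith
    rw [Real.sSup_of_not_bddAbove hbdd, Real.sSup_of_not_bddAbove hbg]

end Aux


section PhiLemmas

lemma map_coeList {β : Type*} (f : ℤ → β) (l : List ℕ) :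
    List.map f (do let a ← l; pure ((a : ℤ))) = l.map (fun j : ℕ => f j) := by
  induction l with
  | nil => rfl
  | cons x xs ih => simpa using ih

variable {d : ℕ} (A : ℤ → Matrix (Fin d) (Fin d) ℝ)

lemma Phi_ofNat (n : ℕ) :
    Phi A (Int.ofNat n) = ((List.range n).map (fun j : ℕ => A ((n : ℤ) - 1 - (j : ℤ)))).prod := by
  simp only [Phi]
  rw [map_coeList]

lemma Phi_negSucc (n : ℕ) :
    Phi A (Int.negSucc n)
      = ((List.range (n + 1)).map (fun j : ℕ => (A (Int.negSucc n + (j : ℤ)))⁻¹)).prod := by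
  simp only [Phi]
  rw [map_coeList]

lemma Phi_zero : Phi A 0 = 1 := by
  have h := Phi_ofNat A 0
  simpa using h

lemma Phi_natCast_succ (n : ℕ) : Phi A ((n : ℤ) + 1) = A n * Phi A (n : ℤ) := by
  show Phi A (Int.ofNat (n + 1)) = A ((n : ℕ) : ℤ) * Phi A (Int.ofNat n)
  rw [Phi_ofNat, Phi_ofNat, List.range_succ_eq_map, List.map_cons, List.prod_cons,
    List.map_map]
  congr 1
  · congr 1; push_cast; ring
  · refine congrArg List.prod (List.map_congr_left (fun j _ => ?_))
    simp only [Function.comp_apply, Nat.succ_eq_add_one]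
    congr 1
    push_cast
    ring

lemma Phi_negSucc_succ (n : ℕ) :
    Phi A (Int.negSucc (n + 1)) = (A (Int.negSucc (n + 1)))⁻¹ * Phi A (Int.negSucc n) := by
  rw [Phi_negSucc, Phi_negSucc, List.range_succ_eq_map, List.map_cons, List.prod_cons,
    List.map_map]
  have h0 : Int.negSucc (n + 1) + ((0 : ℕ) : ℤ) = Int.negSucc (n + 1) := by norm_num
  rw [h0]
  congr 1
  · refine congrArg List.prod (List.map_congr_left (fun j _ => ?_))
    simp only [Function.comp_apply, Nat.succ_eq_add_one]
    congr 2
    simp only [Int.negSucc_eq]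
    push_cast
    ring

lemma Phi_negSucc_zero : Phi A (Int.negSucc 0) = (A (-1))⁻¹ := by
  rw [Phi_negSucc]
  simp [List.range_succ, Int.negSucc_eq]

lemma isUnit_Phi (hA : ∀ n, IsUnit (A n)) (n : ℤ) : IsUnit (Phi A n) := by
  cases n with
  | ofNat m =>
      rw [Phi_ofNat]
      refine List.prod_isUnit ?_
      intro x hx
      simp only [List.mem_map] at hx
      obtain ⟨j, _, rfl⟩ := hx
      exact hA _
  | negSucc m =>
      rw [Phi_negSucc]
      refine List.prod_isUnit ?_
      intro x hx
      simp only [List.mem_map] at hx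
      obtain ⟨j, _, rfl⟩ := hx
      exact Matrix.isUnit_nonsing_inv_iff.mpr (hA _)

lemma mulVec_ne_zero {M : Matrix (Fin d) (Fin d) ℝ} (hM : IsUnit M) {x : Fin d → ℝ}
    (hx : x ≠ 0) : M.mulVec x ≠ 0 := by
  intro h
  apply hx
  have h2 := congrArg (fun y => M⁻¹.mulVec y) h
  simpa [Matrix.mulVec_mulVec,
    Matrix.nonsing_inv_mul M ((Matrix.isUnit_iff_isUnit_det M).mp hM)] using h2

end PhiLemmas

section Conj

variable {d : ℕ} {A F U : ℤ → Matrix (Fin d) (Fin d) ℝ}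

lemma Phi_conj (hA : ∀ n, IsUnit (A n)) (hF : ∀ n, IsUnit (F n))
    (hU : ∀ n : ℤ, U n = (F (n + 1))⁻¹ * A n * F n) (n : ℤ) :
    Phi U n = (F n)⁻¹ * Phi A n * F 0 := by
  have hFdet : ∀ k : ℤ, IsUnit (F k).det := fun k => (Matrix.isUnit_iff_isUnit_det _).mp (hF k)
  have cancel : ∀ (k : ℤ) (X : Matrix (Fin d) (Fin d) ℝ), F k * ((F k)⁻¹ * X) = X := by
    intro k X
    rw [← Matrix.mul_assoc, Matrix.mul_nonsing_inv _ (hFdet k), Matrix.one_mul]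
  cases n with
  | ofNat m =>
      simp only [Int.ofNat_eq_natCast]
      induction m with
      | zero =>
          push_cast
          rw [Phi_zero, Phi_zero, mul_one]
          exact (Matrix.nonsing_inv_mul _ (hFdet 0)).symm
      | succ k ih =>
          push_cast
          rw [Phi_natCast_succ, Phi_natCast_succ, hU (k : ℤ), ih]
          simp only [Matrix.mul_assoc]
          rw [cancel]
  | negSucc m =>
      induction m with
      | zero =>
          have hns0 : Int.negSucc 0 = -1 := rfl
          rw [Phi_negSucc_zero, Phi_negSucc_zero, hns0]
          have h1 : U (-1) = (F 0)⁻¹ * A (-1) * F (-1) := by simpa using hU (-1)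
          rw [h1, Matrix.mul_inv_rev, Matrix.mul_inv_rev,
            Matrix.nonsing_inv_nonsing_inv _ (hFdet 0)]
          simp only [Matrix.mul_assoc]
      | succ k ih =>
          rw [Phi_negSucc_succ, Phi_negSucc_succ, ih]
          have hns : Int.negSucc (k + 1) + 1 = Int.negSucc k := by
            simp only [Int.negSucc_eq]; push_cast; ring
          have h1 : U (Int.negSucc (k + 1))
              = (F (Int.negSucc k))⁻¹ * A (Int.negSucc (k + 1)) * F (Int.negSucc (k + 1)) := by
            rw [hU, hns]
          rw [h1, Matrix.mul_inv_rev, Matrix.mul_inv_rev,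
            Matrix.nonsing_inv_nonsing_inv _ (hFdet _)]
          simp only [Matrix.mul_assoc]
          rw [cancel]

end Conj

theorem stmt16 {d : ℕ} (A F : ℤ → Matrix (Fin d) (Fin d) ℝ)
    (hA : ∀ n, IsUnit (A n)) (hF : ∀ n, IsUnit (F n))
    (MF : ℝ) (hFbd : ∀ n : ℤ, ‖F n‖ ≤ MF ∧ ‖(F n)⁻¹‖ ≤ MF)
    (U : ℤ → Matrix (Fin d) (Fin d) ℝ)
    (hU : ∀ n : ℤ, U n = (F (n + 1))⁻¹ * A n * F n)
    (ξ : Fin d → ℝ) (hξ : ξ ≠ 0) :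
    upperBohl U (((F 0)⁻¹).mulVec ξ) = upperBohl A ξ ∧
    lowerBohl U (((F 0)⁻¹).mulVec ξ) = lowerBohl A ξ := by
  classical
  by_cases hd : d = 0
  · subst hd
    exact absurd (funext fun i => i.elim0) hξ
  haveI : Nonempty (Fin d) := ⟨⟨0, Nat.pos_of_ne_zero hd⟩⟩
  haveI hne : bohlFilter.NeBot := by
    unfold bohlFilter
    refine Filter.comap_neBot (fun t ht => ?_)
    obtain ⟨a, ha⟩ := Filter.mem_atTop_sets.mp ht
    exact ⟨((0 : ℤ), a), by simpa using ha a le_rfl⟩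
  have hFdet : ∀ k : ℤ, IsUnit (F k).det := fun k => (Matrix.isUnit_iff_isUnit_det _).mp (hF k)
  set v : ℤ → Fin d → ℝ := fun n => (Phi A n).mulVec ξ with hv
  set w : ℤ → Fin d → ℝ := fun n => ((F n)⁻¹ * Phi A n).mulVec ξ with hw
  have hMF0 : 0 ≤ MF := le_trans (norm_nonneg _) (hFbd 0).1
  have hMF1 : 1 ≤ MF := by
    have he : ‖(fun _ : Fin d => (1 : ℝ))‖ = 1 := by rw [pi_norm_const]; norm_num
    have h1 : ‖(1 : Matrix (Fin d) (Fin d) ℝ).mulVec (fun _ => 1)‖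
        ≤ ‖(1 : Matrix (Fin d) (Fin d) ℝ)‖ * ‖(fun _ : Fin d => (1 : ℝ))‖ :=
      Matrix.linfty_opNorm_mulVec _ _
    rw [Matrix.one_mulVec, he, mul_one] at h1
    have h2 : ‖(1 : Matrix (Fin d) (Fin d) ℝ)‖ ≤ MF * MF := by
      rw [← Matrix.mul_nonsing_inv (F 0) (hFdet 0)]
      exact le_trans (norm_mul_le _ _)
        (mul_le_mul (hFbd 0).1 (hFbd 0).2 (norm_nonneg _) hMF0)
    nlinarith
  have hMFpos : (0 : ℝ) < MF := lt_of_lt_of_le one_pos hMF1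
  have hvne : ∀ n, v n ≠ 0 := fun n => mulVec_ne_zero (isUnit_Phi A hA n) hξ
  have hwne : ∀ n, w n ≠ 0 := fun n =>
    mulVec_ne_zero ((Matrix.isUnit_nonsing_inv_iff.mpr (hF n)).mul (isUnit_Phi A hA n)) hξ
  have hvpos : ∀ n, 0 < ‖v n‖ := fun n => norm_pos_iff.mpr (hvne n)
  have hwpos : ∀ n, 0 < ‖w n‖ := fun n => norm_pos_iff.mpr (hwne n)
  have hwv : ∀ n, ‖w n‖ ≤ MF * ‖v n‖ := by
    intro n
    have h1 : w n = (F n)⁻¹.mulVec (v n) := by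
      rw [hv, hw]
      exact (Matrix.mulVec_mulVec ξ (F n)⁻¹ (Phi A n)).symm
    rw [h1]
    exact le_trans (Matrix.linfty_opNorm_mulVec _ _)
      (mul_le_mul_of_nonneg_right (hFbd n).2 (norm_nonneg _))
  have hvw : ∀ n, ‖v n‖ ≤ MF * ‖w n‖ := by
    intro n
    have h1 : v n = (F n).mulVec (w n) := by
      rw [hv, hw]
      show (Phi A n).mulVec ξ = (F n).mulVec (((F n)⁻¹ * Phi A n).mulVec ξ)
      rw [Matrix.mulVec_mulVec, ← Matrix.mul_assoc, Matrix.mul_nonsing_inv _ (hFdet n),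
        Matrix.one_mul]
    rw [h1]
    exact le_trans (Matrix.linfty_opNorm_mulVec _ _)
      (mul_le_mul_of_nonneg_right (hFbd n).1 (norm_nonneg _))
  -- the key comparison estimate
  have hratio : ∀ (x y : ℤ → Fin d → ℝ), (∀ n, 0 < ‖x n‖) → (∀ n, 0 < ‖y n‖) →
      (∀ n, ‖x n‖ ≤ MF * ‖y n‖) → (∀ n, ‖y n‖ ≤ MF * ‖x n‖) →
      ∀ ε : ℝ, 0 < ε → ∀ᶠ p in bohlFilter,
        (‖x p.2‖ / ‖x p.1‖) ^ (((p.2 - p.1 : ℤ) : ℝ)⁻¹)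
          ≤ (1 + ε) * (‖y p.2‖ / ‖y p.1‖) ^ (((p.2 - p.1 : ℤ) : ℝ)⁻¹) := by
    intro x y hx hy hxy hyx ε hε
    obtain ⟨N, hN⟩ := pow_unbounded_of_one_lt (MF * MF) (by linarith : (1 : ℝ) < 1 + ε)
    have hev : ∀ᶠ p in bohlFilter, (max (N : ℤ) 1) ≤ p.2 - p.1 := by
      unfold bohlFilter
      refine Filter.eventually_comap.mpr ((Filter.eventually_ge_atTop (max (N : ℤ) 1)).mono ?_)
      intro b hb a hab
      rw [hab]
      exact hb
    filter_upwards [hev] with p hp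
    have hk1 : (1 : ℤ) ≤ p.2 - p.1 := le_trans (le_max_right _ _) hp
    have hkN : (N : ℤ) ≤ p.2 - p.1 := le_trans (le_max_left _ _) hp
    have hkR : (1 : ℝ) ≤ ((p.2 - p.1 : ℤ) : ℝ) := by exact_mod_cast hk1
    have hkNR : (N : ℝ) ≤ ((p.2 - p.1 : ℤ) : ℝ) := by exact_mod_cast hkN
    have hkpos : (0 : ℝ) < ((p.2 - p.1 : ℤ) : ℝ) := lt_of_lt_of_le one_pos hkR
    have he : (0 : ℝ) ≤ (((p.2 - p.1 : ℤ) : ℝ))⁻¹ := by positivity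
    have hb : ‖x p.2‖ / ‖x p.1‖ ≤ (MF * MF) * (‖y p.2‖ / ‖y p.1‖) := by
      have hyne : ‖y p.1‖ ≠ 0 := (hy p.1).ne'
      have hMFne : MF ≠ 0 := hMFpos.ne'
      have hy1 : ‖y p.1‖ / MF ≤ ‖x p.1‖ := by
        rw [div_le_iff₀ hMFpos]
        calc ‖y p.1‖ ≤ MF * ‖x p.1‖ := hyx p.1
          _ = ‖x p.1‖ * MF := mul_comm _ _
      have h1 : ‖x p.2‖ / ‖x p.1‖ ≤ (MF * ‖y p.2‖) / (‖y p.1‖ / MF) :=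
        div_le_div₀ (mul_nonneg hMF0 (norm_nonneg _)) (hxy p.2)
          (div_pos (hy p.1) hMFpos) hy1
      refine le_trans h1 (le_of_eq ?_)
      field_simp
    have hrpow : (‖x p.2‖ / ‖x p.1‖) ^ (((p.2 - p.1 : ℤ) : ℝ))⁻¹
        ≤ ((MF * MF) * (‖y p.2‖ / ‖y p.1‖)) ^ (((p.2 - p.1 : ℤ) : ℝ))⁻¹ :=
      Real.rpow_le_rpow (by positivity) hb he
    have hmul : ((MF * MF) * (‖y p.2‖ / ‖y p.1‖)) ^ (((p.2 - p.1 : ℤ) : ℝ))⁻¹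
        = (MF * MF) ^ (((p.2 - p.1 : ℤ) : ℝ))⁻¹
          * (‖y p.2‖ / ‖y p.1‖) ^ (((p.2 - p.1 : ℤ) : ℝ))⁻¹ :=
      Real.mul_rpow (by positivity) (by positivity)
    have hC : (MF * MF) ^ (((p.2 - p.1 : ℤ) : ℝ))⁻¹ ≤ 1 + ε := by
      have h1 : (MF * MF) ^ (((p.2 - p.1 : ℤ) : ℝ))⁻¹
          ≤ ((1 + ε) ^ N) ^ (((p.2 - p.1 : ℤ) : ℝ))⁻¹ :=
        Real.rpow_le_rpow (by positivity) hN.le he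
      have h2 : ((1 + ε) ^ N) ^ (((p.2 - p.1 : ℤ) : ℝ))⁻¹
          = (1 + ε) ^ ((N : ℝ) * (((p.2 - p.1 : ℤ) : ℝ))⁻¹) := by
        rw [← Real.rpow_natCast (1 + ε) N, ← Real.rpow_mul (by positivity)]
      have hexp : (N : ℝ) * (((p.2 - p.1 : ℤ) : ℝ))⁻¹ ≤ 1 := by
        calc (N : ℝ) * (((p.2 - p.1 : ℤ) : ℝ))⁻¹
            ≤ ((p.2 - p.1 : ℤ) : ℝ) * (((p.2 - p.1 : ℤ) : ℝ))⁻¹ :=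
              mul_le_mul_of_nonneg_right hkNR (by positivity)
          _ = 1 := mul_inv_cancel₀ (ne_of_gt hkpos)
      have h3 : (1 + ε) ^ ((N : ℝ) * (((p.2 - p.1 : ℤ) : ℝ))⁻¹) ≤ (1 + ε) ^ (1 : ℝ) :=
        Real.rpow_le_rpow_of_exponent_le (by linarith) hexp
      rw [Real.rpow_one] at h3
      calc (MF * MF) ^ (((p.2 - p.1 : ℤ) : ℝ))⁻¹
          ≤ ((1 + ε) ^ N) ^ (((p.2 - p.1 : ℤ) : ℝ))⁻¹ := h1
        _ = (1 + ε) ^ ((N : ℝ) * (((p.2 - p.1 : ℤ) : ℝ))⁻¹) := h2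
        _ ≤ 1 + ε := h3
    calc (‖x p.2‖ / ‖x p.1‖) ^ (((p.2 - p.1 : ℤ) : ℝ))⁻¹
        ≤ ((MF * MF) * (‖y p.2‖ / ‖y p.1‖)) ^ (((p.2 - p.1 : ℤ) : ℝ))⁻¹ := hrpow
      _ = (MF * MF) ^ (((p.2 - p.1 : ℤ) : ℝ))⁻¹
          * (‖y p.2‖ / ‖y p.1‖) ^ (((p.2 - p.1 : ℤ) : ℝ))⁻¹ := hmul
      _ ≤ (1 + ε) * (‖y p.2‖ / ‖y p.1‖) ^ (((p.2 - p.1 : ℤ) : ℝ))⁻¹ :=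
          mul_le_mul_of_nonneg_right hC (Real.rpow_nonneg (by positivity) _)
  -- rewrite the Bohl exponents in terms of `v` and `w`
  have keyU : ∀ n : ℤ, (transOp U n 0).mulVec ((F 0)⁻¹.mulVec ξ) = w n := by
    intro n
    rw [transOp, Phi_zero U, inv_one, mul_one, Phi_conj hA hF hU n, Matrix.mulVec_mulVec,
      Matrix.mul_assoc ((F n)⁻¹ * Phi A n), Matrix.mul_nonsing_inv _ (hFdet 0), Matrix.mul_one,
      hw]
  have keyA : ∀ n : ℤ, (transOp A n 0).mulVec ξ = v n := by
    intro n
    rw [transOp, Phi_zero A, inv_one, mul_one, hv]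
  have hfU : (fun p : ℤ × ℤ =>
        (‖(transOp U p.2 0).mulVec ((F 0)⁻¹.mulVec ξ)‖
          / ‖(transOp U p.1 0).mulVec ((F 0)⁻¹.mulVec ξ)‖) ^ (((p.2 - p.1 : ℤ) : ℝ)⁻¹))
      = fun p : ℤ × ℤ => (‖w p.2‖ / ‖w p.1‖) ^ (((p.2 - p.1 : ℤ) : ℝ)⁻¹) := by
    funext p
    rw [keyU, keyU]
  have hfA : (fun p : ℤ × ℤ =>
        (‖(transOp A p.2 0).mulVec ξ‖ / ‖(transOp A p.1 0).mulVec ξ‖)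
          ^ (((p.2 - p.1 : ℤ) : ℝ)⁻¹))
      = fun p : ℤ × ℤ => (‖v p.2‖ / ‖v p.1‖) ^ (((p.2 - p.1 : ℤ) : ℝ)⁻¹) := by
    funext p
    rw [keyA, keyA]
  have hnnw : ∀ p : ℤ × ℤ, 0 ≤ (‖w p.2‖ / ‖w p.1‖) ^ (((p.2 - p.1 : ℤ) : ℝ)⁻¹) :=
    fun p => Real.rpow_nonneg (by positivity) _
  have hnnv : ∀ p : ℤ × ℤ, 0 ≤ (‖v p.2‖ / ‖v p.1‖) ^ (((p.2 - p.1 : ℤ) : ℝ)⁻¹) :=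
    fun p => Real.rpow_nonneg (by positivity) _
  have hWV := hratio w v hwpos hvpos hwv hvw
  have hVW := hratio v w hvpos hwpos hvw hwv
  constructor
  · rw [upperBohl, upperBohl, hfU, hfA]
    exact le_antisymm (limsup_le_of_ratio hnnw hnnv hWV hVW)
      (limsup_le_of_ratio hnnv hnnw hVW hWV)
  · rw [lowerBohl, lowerBohl, hfU, hfA]
    exact le_antisymm (liminf_le_of_ratio hnnv hnnw hVW hWV)
      (liminf_le_of_ratio hnnw hnnv hWV hVW)
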